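/- arXiv:2505.09909 — 7 statements merged into one kernel-verified Lean document; each statement's English description precedes it below -/
import Mathlib

section
/- Let D be a noncommutative division ring. Then D is infinite. -/
/-- A noncommutative division ring is infinite. -/
theorem stmt_1 (D : Type*) [DivisionRing D]
    (hnc : ∃ a b : D, a * b ≠ b * a) : Infinite D := by
  obtain ⟨a, b, hab⟩ := hnc
  by_contra hinf
  have : Finite D := not_infinite_iff_finite.mp hinf
  exact hab ((littleWedderburn D).mul_comm a b)
end

section
/- Let D be a division ring, let A be an n×n matrix over D and B an m×m matrix over D. Suppose there exists a polynomial p in one variable with coefficients in the center of D such that p(A) = 0 and p(B) is invertible. Then for every n×m matrix C over D, the Sylvester equation A·X − X·B = C has a unique solution X in the n×m matrices over D. -/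
/-!
The maps `X ↦ A * X` and `X ↦ X * B` are commuting endomorphisms `L` and `R` of the module of
`n × m` matrices, with `p(L) = 0` and `p(R)` invertible. For commuting `a` and `b`, working in the
commutative algebra they generate, `a - b` divides `p(a) - p(b)` by a cofactor commuting with it,
so `a - b` is invertible once `p(a) = 0` and `p(b)` is a unit. The Sylvester operator `L - R` is
therefore bijective.
-/

open Polynomial Matrix
open scoped IsMulCommutative

theorem Commute.isUnit_sub_of_aeval_eq_zero_of_isUnit_aeval {R E : Type*} [CommRing R]
    [Ring E] [Algebra R E] {a b : E} (hab : Commute a b) (p : R[X]) (ha : aeval a p = 0)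
    (hb : IsUnit (aeval b p)) : IsUnit (a - b) := by
  have : IsMulCommutative (Algebra.adjoin R {a, b}) := Algebra.isMulCommutative_adjoin R <| by
    rintro x (rfl | rfl) y (rfl | rfl) <;> first | rfl | exact hab.eq | exact hab.eq.symm
  let S := Algebra.adjoin R {a, b}
  let x : S := ⟨a, Algebra.subset_adjoin (by simp)⟩
  let y : S := ⟨b, Algebra.subset_adjoin (by simp)⟩
  obtain ⟨c, hc⟩ := sub_dvd_eval_sub x y (p.map (algebraMap R S))
  have hfactor : -aeval b p = (a - b) * c := by
    simpa [x, y, eval_map_algebraMap, aeval_subalgebra_coe, ha] using congrArg S.val hc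
  have hcomm : Commute (a - b) c := congrArg S.val (mul_comm (x - y) c)
  exact (hcomm.isUnit_mul_iff.1 (hfactor ▸ hb.neg)).1

namespace Matrix

section

variable {R α : Type*} [CommSemiring R] [Semiring α] [Algebra R α]

theorem aeval_mulLeftLinearMap {l : Type*} (m : Type*) [Fintype l] [DecidableEq l]
    (A : Matrix l l α) (p : R[X]) :
    aeval (mulLeftLinearMap m R A) p = mulLeftLinearMap m R (aeval A p) := by
  ext1 X
  simp [aeval_eq_sum_range, Matrix.sum_mul]

theorem aeval_mulRightLinearMap (l : Type*) {m : Type*} [Fintype m] [DecidableEq m]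
    (B : Matrix m m α) (p : R[X]) :
    aeval (mulRightLinearMap l R B) p = mulRightLinearMap l R (aeval B p) := by
  ext1 X
  simp [aeval_eq_sum_range, Matrix.mul_sum]

theorem isUnit_mulRightLinearMap (l : Type*) {m : Type*} [Fintype m] [DecidableEq m]
    {B : Matrix m m α} (hB : IsUnit B) : IsUnit (mulRightLinearMap l R B) := by
  obtain ⟨u, rfl⟩ := hB
  refine isUnit_iff_exists.2 ⟨mulRightLinearMap l R ↑u⁻¹, ?_, ?_⟩ <;>
    rw [Module.End.mul_eq_comp, ← mulRightLinearMap_mul] <;>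
    simp [Module.End.one_eq_id]

end

theorem bijective_mul_sub_mul {R α l m : Type*} [CommRing R] [Ring α] [Algebra R α]
    [Fintype l] [DecidableEq l] [Fintype m] [DecidableEq m]
    (A : Matrix l l α) (B : Matrix m m α) (p : R[X])
    (hA : aeval A p = 0) (hB : IsUnit (aeval B p)) :
    Function.Bijective fun X : Matrix l m α => A * X - X * B := by
  have hcomm : Commute (mulLeftLinearMap m R A) (mulRightLinearMap l R B) :=
    commute_mulLeftLinearMap_mulRightLinearMap A B
  have hunit := hcomm.isUnit_sub_of_aeval_eq_zero_of_isUnit_aeval p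
    (by rw [aeval_mulLeftLinearMap, hA, mulLeftLinearMap_zero_eq_zero])
    (by rw [aeval_mulRightLinearMap]; exact isUnit_mulRightLinearMap l hB)
  exact (Module.End.isUnit_iff _).1 hunit

end Matrix

/-- Sylvester equation over a division ring. -/
theorem stmt_2 (D : Type*) [DivisionRing D] {n m : ℕ}
    (A : Matrix (Fin n) (Fin n) D) (B : Matrix (Fin m) (Fin m) D)
    (p : Polynomial (Subring.center D))
    (hA : Polynomial.aeval A p = 0)
    (hB : IsUnit (Polynomial.aeval B p)) :
    ∀ C : Matrix (Fin n) (Fin m) D,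
      ∃! X : Matrix (Fin n) (Fin m) D, A * X - X * B = C :=
  Function.bijective_iff_existsUnique _ |>.1 (Matrix.bijective_mul_sub_mul A B p hA hB)
end

section
/- Let D be a division ring, B an n×n matrix over D, α an n×1 column over D, and a ∈ D. If there exists a polynomial p with coefficients in the center of D such that p(B) = 0 and p(a) ≠ 0, then the (n+1)×(n+1) block matrix [[B, α],[0, a]] is similar over D to the block diagonal matrix [[B, 0],[0, a]]. -/
open Polynomial Matrix Finset

set_option maxHeartbeats 1000000 in
set_option synthInstance.maxHeartbeats 200000 in
/-- If p(B) = 0 and p(a) ≠ 0 for a polynomial p with central coefficients, then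
    the block matrix [[B, α],[0, a]] is similar over D to [[B, 0],[0, a]]. -/
theorem stmt_3 (D : Type*) [DivisionRing D] {n : ℕ}
    (B : Matrix (Fin n) (Fin n) D) (α : Matrix (Fin n) (Fin 1) D) (a : D)
    (p : Polynomial (Subring.center D))
    (hB : Polynomial.aeval B p = 0)
    (ha : Polynomial.aeval a p ≠ 0) :
    ∃ P Q : Matrix (Fin n ⊕ Fin 1) (Fin n ⊕ Fin 1) D, P * Q = 1 ∧ Q * P = 1 ∧
      Q * Matrix.fromBlocks B α 0 (Matrix.of fun _ _ => a) * P =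
        Matrix.fromBlocks B 0 0 (Matrix.of fun _ _ => a) := by
  classical
  set k := Subring.center D with hk
  set A0 : Matrix (Fin 1) (Fin 1) D := Matrix.of fun _ _ => a with hA0
  -- left and right multiplication operators
  let L : Module.End k (Matrix (Fin n) (Fin 1) D) :=
    { toFun := fun X => B * X
      map_add' := fun X Y => Matrix.mul_add _ _ _
      map_smul' := fun c X => Matrix.mul_smul _ _ _ }
  let R : Module.End k (Matrix (Fin n) (Fin 1) D) :=
    { toFun := fun X => X * A0
      map_add' := fun X Y => Matrix.add_mul _ _ _
      map_smul' := fun c X => Matrix.smul_mul _ _ _ }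
  have hLpow : ∀ (i : ℕ) (X : Matrix (Fin n) (Fin 1) D), (L ^ i) X = B ^ i * X := by
    intro i
    induction i with
    | zero => intro X; rw [pow_zero, pow_zero]; exact (Matrix.one_mul X).symm
    | succ m ih =>
      intro X
      rw [pow_succ, pow_succ, Module.End.mul_apply, ih]
      show B ^ m * (B * X) = B ^ m * B * X
      rw [Matrix.mul_assoc]
  have hRpow : ∀ (i : ℕ) (X : Matrix (Fin n) (Fin 1) D), (R ^ i) X = X * A0 ^ i := by
    intro i
    induction i with
    | zero => intro X; rw [pow_zero, pow_zero]; exact (Matrix.mul_one X).symm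
    | succ m ih =>
      intro X
      rw [pow_succ, pow_succ, Module.End.mul_apply]
      show (R ^ m) (X * A0) = X * (A0 ^ m * A0)
      rw [ih, Matrix.mul_assoc, (Commute.refl A0).pow_left m]
  -- aeval on L and R
  set N := p.natDegree + 1 with hN
  have haevalL : ∀ X : Matrix (Fin n) (Fin 1) D, (Polynomial.aeval L p) X = (Polynomial.aeval B p) * X := by
    intro X
    rw [Polynomial.aeval_eq_sum_range (x := L), Polynomial.aeval_eq_sum_range (x := B)]
    rw [LinearMap.sum_apply, Matrix.sum_mul]
    refine Finset.sum_congr rfl fun i _ => ?_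
    rw [LinearMap.smul_apply, hLpow, Matrix.smul_mul]
  have haevalR : ∀ X : Matrix (Fin n) (Fin 1) D, (Polynomial.aeval R p) X = X * (Polynomial.aeval A0 p) := by
    intro X
    rw [Polynomial.aeval_eq_sum_range (x := R), Polynomial.aeval_eq_sum_range (x := A0)]
    rw [LinearMap.sum_apply, Matrix.mul_sum]
    refine Finset.sum_congr rfl fun i _ => ?_
    rw [LinearMap.smul_apply, hRpow, Matrix.mul_smul]
  -- aeval at the 1x1 matrix
  have hA0pow : ∀ i : ℕ, A0 ^ i = Matrix.of fun _ _ => a ^ i := by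
    intro i
    induction i with
    | zero =>
      ext x y
      fin_cases x; fin_cases y
      simp [pow_zero, Matrix.one_apply]
    | succ m ih =>
      rw [pow_succ, ih]
      ext x y
      fin_cases x; fin_cases y
      simp [hA0, Matrix.mul_apply, pow_succ]
  have haevalA0 : Polynomial.aeval A0 p = Matrix.of fun _ _ => Polynomial.aeval a p := by
    rw [Polynomial.aeval_eq_sum_range (x := A0), Polynomial.aeval_eq_sum_range (x := a)]
    ext x y
    fin_cases x; fin_cases y
    rw [Matrix.sum_apply]
    refine Finset.sum_congr rfl fun i _ => ?_
    rw [hA0pow]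
    simp [Matrix.smul_apply]
  -- the Sylvester solution
  have hcomm : Commute L R := by
    apply LinearMap.ext
    intro X
    show B * (X * A0) = B * X * A0
    exact (Matrix.mul_assoc _ _ _).symm
  set v : Module.End k (Matrix (Fin n) (Fin 1) D) :=
    ∑ i ∈ Finset.range N, p.coeff i • (∑ j ∈ Finset.range i, L ^ j * R ^ (i - 1 - j)) with hv
  have huv : (L - R) * v = Polynomial.aeval L p - Polynomial.aeval R p := by
    rw [hv, Finset.mul_sum, Polynomial.aeval_eq_sum_range (x := L),
      Polynomial.aeval_eq_sum_range (x := R), ← hN, ← Finset.sum_sub_distrib]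
    refine Finset.sum_congr rfl fun i _ => ?_
    rw [mul_smul_comm, hcomm.mul_geom_sum₂, smul_sub]
  set c : D := Polynomial.aeval a p with hc
  set Y : Matrix (Fin n) (Fin 1) D := α * Matrix.of (fun _ _ => c⁻¹) with hY
  set X : Matrix (Fin n) (Fin 1) D := v Y with hX
  have hsolve : B * X - X * A0 = -α := by
    have h1 : B * X - X * A0 = ((L - R) * v) Y := by
      rw [Module.End.mul_apply, LinearMap.sub_apply]
      rfl
    rw [h1, huv, LinearMap.sub_apply, haevalL, haevalR, hB, haevalA0, Matrix.zero_mul,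
      zero_sub, hY]
    show -((α * (Matrix.of fun (_ _ : Fin 1) => c⁻¹)) * (Matrix.of fun (_ _ : Fin 1) => c)) = -α
    rw [Matrix.mul_assoc]
    congr 1
    have h3 : (Matrix.of fun (_ _ : Fin 1) => c⁻¹) * (Matrix.of fun (_ _ : Fin 1) => c) = 1 := by
      ext x y
      fin_cases x; fin_cases y
      simp [Matrix.mul_apply, Matrix.one_apply, inv_mul_cancel₀ ha]
    rw [h3, Matrix.mul_one]
  -- conjugating matrices
  refine ⟨Matrix.fromBlocks 1 X 0 1, Matrix.fromBlocks 1 (-X) 0 1, ?_, ?_, ?_⟩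
  · rw [Matrix.fromBlocks_multiply]
    simp [Matrix.fromBlocks_one]
  · rw [Matrix.fromBlocks_multiply]
    simp [Matrix.fromBlocks_one]
  · rw [Matrix.fromBlocks_multiply, Matrix.fromBlocks_multiply]
    have h2 : B * X + (α + -(X * A0)) = 0 := by
      have h4 : B * X + (α + -(X * A0)) = (B * X - X * A0) + α := by abel
      rw [h4, hsolve]
      abel
    simp only [Matrix.one_mul, Matrix.mul_one, Matrix.zero_mul, Matrix.mul_zero,
      Matrix.neg_mul, add_zero, zero_add]
    rw [h2]
end

section
/- Over the field with two elements, the n×n matrix (n ≥ 2) given by the block diagonal matrix [[1,1],[1,0]] ⊕ I_{n−2} cannot be written as a sum of two diagonalizable matrices. -/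
/-!
Over `𝔽₂` every diagonal matrix, hence every diagonalizable one, is idempotent. If `a = b + c`
with `b, c` idempotent in a ring of characteristic two, then `e := a² + a = bc + cb`, and a short
computation gives `be + eb = e`. When `e` is itself idempotent, sandwiching this identity between
two copies of `e` yields `e = e(be + eb)e = 2·ebe = 0`. For `A = [[1,1],[1,0]] ⊕ I`, however,
`A² + A = I₂ ⊕ 0` is a nonzero idempotent.
-/

open Matrix

/-- `M` is diagonalizable over `D`: similar over `D` to a diagonal matrix. -/
def IsDiagonalizable {D : Type*} [DivisionRing D] {ι : Type*} [Fintype ι] [DecidableEq ι]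
    (M : Matrix ι ι D) : Prop :=
  ∃ P Q : Matrix ι ι D, P * Q = 1 ∧ Q * P = 1 ∧ ∃ d : ι → D, Q * M * P = Matrix.diagonal d

theorem IsIdempotentElem.eq_zero_of_mul_add_mul_eq_self {R : Type*} [Ring R] [CharP R 2]
    {b e : R} (he : IsIdempotentElem e) (h : b * e + e * b = e) : e = 0 := by
  calc e = e * (b * e + e * b) * e := by rw [h, he.eq, he.eq]
    _ = e * b * (e * e) + (e * e) * b * e := by noncomm_ring
    _ = 0 := by rw [he.eq, CharTwo.add_self_eq_zero]

theorem IsIdempotentElem.add_sq_add_eq_zero {R : Type*} [Ring R] [CharP R 2] {b c : R}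
    (hb : IsIdempotentElem b) (hc : IsIdempotentElem c)
    (he : IsIdempotentElem ((b + c) * (b + c) + (b + c))) :
    (b + c) * (b + c) + (b + c) = 0 := by
  have he_eq : (b + c) * (b + c) + (b + c) = b * c + c * b := by
    calc (b + c) * (b + c) + (b + c) = (b * b + b) + (b * c + c * b) + (c * c + c) := by
          noncomm_ring
      _ = b * c + c * b := by
          rw [hb.eq, hc.eq, CharTwo.add_self_eq_zero, CharTwo.add_self_eq_zero, zero_add, add_zero]
  rw [he_eq] at he ⊢
  refine he.eq_zero_of_mul_add_mul_eq_self (b := b) ?_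
  calc b * (b * c + c * b) + (b * c + c * b) * b
      = (b * b) * c + c * (b * b) + (b * c * b + b * c * b) := by noncomm_ring
    _ = b * c + c * b := by rw [hb.eq, CharTwo.add_self_eq_zero, add_zero]

theorem IsDiagonalizable.isIdempotentElem {ι : Type*} [Fintype ι] [DecidableEq ι]
    {M : Matrix ι ι (ZMod 2)} (h : IsDiagonalizable M) : IsIdempotentElem M := by
  obtain ⟨P, Q, hPQ, hQP, d, hd⟩ := h
  have hM : M = P * diagonal d * Q := by
    calc M = (P * Q) * M * (P * Q) := by rw [hPQ, one_mul, mul_one]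
      _ = P * diagonal d * Q := by rw [← hd]; noncomm_ring
  have hdiag : IsIdempotentElem (diagonal d) := by
    rw [IsIdempotentElem, diagonal_mul_diagonal]
    congr 1
    funext i
    generalize d i = x
    fin_cases x <;> rfl
  rw [hM, IsIdempotentElem]
  calc P * diagonal d * Q * (P * diagonal d * Q) = P * (diagonal d * (Q * P) * diagonal d) * Q := by
        noncomm_ring
    _ = P * diagonal d * Q := by rw [hQP, mul_one, hdiag.eq, mul_assoc]

theorem fromBlocks_sq_add_self {m : Type*} [Fintype m] [DecidableEq m] :
    (fromBlocks !![1, 1; 1, 0] 0 0 1 : Matrix (Fin 2 ⊕ m) (Fin 2 ⊕ m) (ZMod 2)) *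
        fromBlocks !![1, 1; 1, 0] 0 0 1 + fromBlocks !![1, 1; 1, 0] 0 0 1 =
      fromBlocks 1 0 0 0 := by
  have hK : (!![1, 1; 1, 0] : Matrix (Fin 2) (Fin 2) (ZMod 2)) * !![1, 1; 1, 0]
      + !![1, 1; 1, 0] = 1 := by decide
  simp only [fromBlocks_multiply, fromBlocks_add, Matrix.mul_zero, Matrix.zero_mul, add_zero,
    zero_add, Matrix.mul_one, hK]
  congr 1
  ext i j
  exact CharTwo.add_self_eq_zero _

theorem isIdempotentElem_fromBlocks_one_zero {R l m : Type*} [Semiring R] [Fintype l]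
    [DecidableEq l] [Fintype m] [DecidableEq m] :
    IsIdempotentElem (fromBlocks 1 0 0 0 : Matrix (l ⊕ m) (l ⊕ m) R) := by
  simp [IsIdempotentElem, fromBlocks_multiply]

theorem fromBlocks_one_zero_ne_zero {R l m : Type*} [Semiring R] [Nontrivial R] [DecidableEq l]
    [Nonempty l] : (fromBlocks 1 0 0 0 : Matrix (l ⊕ m) (l ⊕ m) R) ≠ 0 := by
  intro h
  simpa using congr_fun₂ h (Sum.inl (Classical.arbitrary l)) (Sum.inl (Classical.arbitrary l))

theorem stmt_9_general {n : ℕ} :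
    ¬ ∃ B C : Matrix (Fin 2 ⊕ Fin (n - 2)) (Fin 2 ⊕ Fin (n - 2)) (ZMod 2),
      IsDiagonalizable B ∧ IsDiagonalizable C ∧
      Matrix.fromBlocks (!![1, 1; 1, 0]) 0 0 (1 : Matrix (Fin (n - 2)) (Fin (n - 2)) (ZMod 2))
        = B + C := by
  rintro ⟨B, C, hB, hC, hA⟩
  have hsq : (B + C) * (B + C) + (B + C) = fromBlocks 1 0 0 0 := by
    rw [← hA]; exact fromBlocks_sq_add_self
  apply fromBlocks_one_zero_ne_zero (R := ZMod 2) (l := Fin 2) (m := Fin (n - 2))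
  rw [← hsq]
  exact hB.isIdempotentElem.add_sq_add_eq_zero hC.isIdempotentElem
    (hsq ▸ isIdempotentElem_fromBlocks_one_zero)

/-- Over 𝔽₂, the matrix [[1,1],[1,0]] ⊕ I_{n-2} (n ≥ 2) is not a sum of two
    diagonalizable matrices. -/
theorem stmt_9 {n : ℕ} (hn : 2 ≤ n) :
    ¬ ∃ B C : Matrix (Fin 2 ⊕ Fin (n - 2)) (Fin 2 ⊕ Fin (n - 2)) (ZMod 2),
      IsDiagonalizable B ∧ IsDiagonalizable C ∧
      Matrix.fromBlocks (!![1, 1; 1, 0]) 0 0 (1 : Matrix (Fin (n - 2)) (Fin (n - 2)) (ZMod 2))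
        = B + C :=
  stmt_9_general
end

section
/- Let D be a division ring that is not the field with two elements, and let N be a nilpotent n×n matrix over D. Then N can be written as a sum of two diagonalizable matrices over D. -/
section Grading

variable {D : Type*} [DivisionRing D]

/-- Relative complement: given `X, Y ≤ Z` with `X ⊓ Y = ⊥`, there is a complement of `X`
inside `Z` containing `Y`. -/
theorem exists_compl_between {V : Type*} [AddCommGroup V] [Module D V]
    (X Y Z : Submodule D V) (hXZ : X ≤ Z) (hYZ : Y ≤ Z) (hXY : X ⊓ Y = ⊥) :
    ∃ C : Submodule D V, Y ≤ C ∧ C ≤ Z ∧ C ⊓ X = ⊥ ∧ C ⊔ X = Z := by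
  obtain ⟨W', hW'⟩ := Submodule.exists_isCompl ((X ⊔ Y).comap Z.subtype)
  have hmapU : ((X ⊔ Y).comap Z.subtype).map Z.subtype = X ⊔ Y := by
    rw [Submodule.map_comap_subtype, inf_eq_right.mpr (sup_le hXZ hYZ)]
  refine ⟨Y ⊔ W'.map Z.subtype, le_sup_left, ?_, ?_, ?_⟩
  · exact sup_le hYZ (Submodule.map_subtype_le _ _)
  · rw [eq_bot_iff]
    intro v hv
    have hvC : v ∈ Y ⊔ W'.map Z.subtype := hv.1
    have hvX : v ∈ X := hv.2
    rw [Submodule.mem_sup] at hvC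
    obtain ⟨y, hy, w, hw, rfl⟩ := hvC
    have hwZ : w ∈ ((X ⊔ Y).comap Z.subtype).map Z.subtype := by
      rw [hmapU]
      have : w = (y + w) - y := by abel
      rw [this]
      exact sub_mem (Submodule.mem_sup_left hvX) (Submodule.mem_sup_right hy)
    have hw0 : w = 0 := by
      have : w ∈ (((X ⊔ Y).comap Z.subtype) ⊓ W').map Z.subtype := by
        rw [Submodule.map_inf _ Z.injective_subtype ]
        exact ⟨hwZ, hw⟩
      rw [hW'.inf_eq_bot, Submodule.map_bot, Submodule.mem_bot] at this
      exact this
    rw [hw0, add_zero] at hvX ⊢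
    have : y ∈ X ⊓ Y := ⟨hvX, hy⟩
    rw [hXY] at this
    exact this
  · calc (Y ⊔ W'.map Z.subtype) ⊔ X
        = (X ⊔ Y) ⊔ W'.map Z.subtype := by
          rw [sup_comm (Y ⊔ W'.map Z.subtype) X, ← sup_assoc]
      _ = ((X ⊔ Y).comap Z.subtype).map Z.subtype ⊔ W'.map Z.subtype := by rw [hmapU]
      _ = (((X ⊔ Y).comap Z.subtype) ⊔ W').map Z.subtype := by rw [Submodule.map_sup]
      _ = (⊤ : Submodule D Z).map Z.subtype := by rw [hW'.sup_eq_top]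
      _ = Z := Submodule.map_subtype_top Z

/-- Auxiliary induction: every nilpotent endomorphism of a finite-dimensional space over a
division ring admits a 2-grading `V = A ⊕ B` with `f A ≤ B` and `f B ≤ A`. -/
theorem grading_aux :
    ∀ (n : ℕ) (V : Type*) [AddCommGroup V] [Module D V] [FiniteDimensional D V],
      Module.finrank D V ≤ n → ∀ f : V →ₗ[D] V, IsNilpotent f →
      ∃ A B : Submodule D V, IsCompl A B ∧ A.map f ≤ B ∧ B.map f ≤ A := by
  intro n
  induction n with
  | zero =>
    intro V _ _ _ hr f _
    have hsub : Subsingleton V := by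
      rw [← Module.finrank_zero_iff (R := D)]
      omega
    refine ⟨⊤, ⊥, isCompl_top_bot, ?_, ?_⟩ <;>
    · intro x _
      have : x = 0 := Subsingleton.elim x 0
      simp [this]
  | succ n ih =>
    intro V _ _ _ hr f hfnil
    by_cases hV : Subsingleton V
    · refine ⟨⊤, ⊥, isCompl_top_bot, ?_, ?_⟩ <;>
      · intro x _
        have : x = 0 := Subsingleton.elim x 0
        simp [this]
    · have hnt : Nontrivial V := not_subsingleton_iff_nontrivial.mp hV
      set W := LinearMap.range f with hW
      have hWne : W ≠ ⊤ := by
        intro htop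
        have hsurj : Function.Surjective f := LinearMap.range_eq_top.mp htop
        have hinj : Function.Injective f := LinearMap.injective_iff_surjective.mpr hsurj
        obtain ⟨k, hk⟩ := hfnil
        have hpowinj : ∀ m : ℕ, Function.Injective ⇑(f ^ m : V →ₗ[D] V) := by
          intro m
          induction m with
          | zero => simpa [Module.End.coe_one] using Function.injective_id
          | succ m ihm =>
            rw [pow_succ, Module.End.mul_eq_comp, LinearMap.coe_comp]
            exact ihm.comp hinj
        have hki := hpowinj k
        rw [hk] at hki
        obtain ⟨x, hx⟩ := exists_ne (0 : V)
        exact hx (hki (by simp : (0 : V →ₗ[D] V) x = (0 : V →ₗ[D] V) 0))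
      have hWlt : Module.finrank D W < Module.finrank D V :=
        Submodule.finrank_lt hWne
      have hmaps : ∀ x ∈ W, f x ∈ W := fun x _ => LinearMap.mem_range_self f x
      have hf'nil : IsNilpotent (f.restrict hmaps) := by
        obtain ⟨k, hk⟩ := hfnil
        refine ⟨k, ?_⟩
        rw [Module.End.pow_restrict]
        ext w
        simp [LinearMap.restrict_apply, hk]
      obtain ⟨A', B', hcompl', hgA', hgB'⟩ :=
        ih W (by omega) (f.restrict hmaps) hf'nil
      set A'' := A'.map W.subtype with hA''
      set B'' := B'.map W.subtype with hB''
      have hABbot : A'' ⊓ B'' = ⊥ := by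
        rw [hA'', hB'', ← Submodule.map_inf _ W.injective_subtype, hcompl'.inf_eq_bot,
          Submodule.map_bot]
      have hABsup : A'' ⊔ B'' = W := by
        rw [hA'', hB'', ← Submodule.map_sup, hcompl'.sup_eq_top, Submodule.map_subtype_top]
      have hgA'' : A''.map f ≤ B'' := by
        rintro _ ⟨_, ⟨a, ha, rfl⟩, rfl⟩
        have h1 : (↑(f.restrict hmaps a) : V) = f (W.subtype a) :=
          LinearMap.restrict_coe_apply _ _ _
        exact h1 ▸ Submodule.mem_map_of_mem (hgA' (Submodule.mem_map_of_mem ha))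
      have hgB'' : B''.map f ≤ A'' := by
        rintro _ ⟨_, ⟨b, hb, rfl⟩, rfl⟩
        have h1 : (↑(f.restrict hmaps b) : V) = f (W.subtype b) :=
          LinearMap.restrict_coe_apply _ _ _
        exact h1 ▸ Submodule.mem_map_of_mem (hgB' (Submodule.mem_map_of_mem hb))
      -- construct A
      obtain ⟨A, hYA, hAZ, hAXbot, hAXsup⟩ :=
        exists_compl_between (B'' ⊓ LinearMap.ker f) A'' (B''.comap f)
          (fun x hx => by
            have : f x = 0 := hx.2
            simp only [Submodule.mem_comap, this]
            exact zero_mem _)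
          (fun x hx => Submodule.mem_comap.mpr (hgA'' ⟨x, hx, rfl⟩))
          (by
            rw [eq_bot_iff]
            rintro x ⟨⟨hxB, _⟩, hxA⟩
            rw [← hABbot]
            exact ⟨hxA, hxB⟩)
      have hBAbot : B'' ⊓ A = ⊥ := by
        rw [eq_bot_iff]
        rintro x ⟨hxB, hxA⟩
        have hfxB : f x ∈ B'' := Submodule.mem_comap.mp (hAZ hxA)
        have hfxA : f x ∈ A'' := hgB'' ⟨x, hxB, rfl⟩
        have hfx0 : f x = 0 := by
          have : f x ∈ A'' ⊓ B'' := ⟨hfxA, hfxB⟩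
          rw [hABbot] at this
          exact this
        have : x ∈ A ⊓ (B'' ⊓ LinearMap.ker f) := ⟨hxA, hxB, hfx0⟩
        rw [hAXbot] at this
        exact this
      -- construct B
      obtain ⟨B, hYB, hBZ, hBXbot, hBXsup⟩ :=
        exists_compl_between (A ⊓ A.comap f) B'' (A.comap f)
          inf_le_right
          (fun x hx => Submodule.mem_comap.mpr (hYA (hgB'' ⟨x, hx, rfl⟩)))
          (by
            rw [eq_bot_iff]
            rintro x ⟨⟨hxA, _⟩, hxB⟩
            rw [← hBAbot]
            exact ⟨hxB, hxA⟩)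
      refine ⟨A, B, ⟨?_, ?_⟩, ?_, ?_⟩
      · -- disjoint
        rw [disjoint_iff, eq_bot_iff]
        rintro x ⟨hxA, hxB⟩
        have : x ∈ B ⊓ (A ⊓ A.comap f) := ⟨hxB, hxA, hBZ hxB⟩
        rw [hBXbot] at this
        exact this
      · -- codisjoint
        rw [codisjoint_iff, eq_top_iff]
        intro v _
        have hfv : f v ∈ A'' ⊔ B'' := by rw [hABsup]; exact LinearMap.mem_range_self f v
        rw [Submodule.mem_sup] at hfv
        obtain ⟨a, ha, b, hb, hab⟩ := hfv
        have haW : a ∈ W := by rw [← hABsup]; exact Submodule.mem_sup_left ha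
        obtain ⟨u, hu⟩ := haW
        have huB₀ : u ∈ A.comap f := Submodule.mem_comap.mpr (by rw [hu]; exact hYA ha)
        have hvuA₀ : v - u ∈ B''.comap f := by
          refine Submodule.mem_comap.mpr ?_
          have : f (v - u) = b := by
            rw [map_sub, hu]
            rw [← hab]
            abel
          rw [this]
          exact hb
        have hvu : v - u ∈ A ⊔ B := by
          rw [← hAXsup] at hvuA₀
          rcases Submodule.mem_sup.mp hvuA₀ with ⟨p, hp, q, hq, hpq⟩
          rw [← hpq]
          exact add_mem (Submodule.mem_sup_left hp) (Submodule.mem_sup_right (hYB hq.1))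
        have huAB : u ∈ A ⊔ B := by
          rw [← hBXsup] at huB₀
          rcases Submodule.mem_sup.mp huB₀ with ⟨p, hp, q, hq, hpq⟩
          rw [← hpq]
          exact add_mem (Submodule.mem_sup_right hp) (Submodule.mem_sup_left hq.1)
        have : v = (v - u) + u := by abel
        rw [this]
        exact add_mem hvu huAB
      · -- A.map f ≤ B
        refine le_trans ?_ hYB
        rintro _ ⟨x, hx, rfl⟩
        exact Submodule.mem_comap.mp (hAZ hx)
      · -- B.map f ≤ A
        rintro _ ⟨x, hx, rfl⟩
        exact Submodule.mem_comap.mp (hBZ hx)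

theorem grading {V : Type*} [AddCommGroup V] [Module D V] [FiniteDimensional D V]
    (f : V →ₗ[D] V) (hf : IsNilpotent f) :
    ∃ A B : Submodule D V, IsCompl A B ∧ A.map f ≤ B ∧ B.map f ≤ A :=
  grading_aux (Module.finrank D V) V le_rfl f hf

end Grading

section Matrices

variable {D : Type*} [DivisionRing D] {n : ℕ}

/-- A matrix of the form `S * diagonal d * T` with `S * T = T * S = 1` is diagonalizable. -/
theorem isDiagonalizable_conj_diagonal (S T : Matrix (Fin n) (Fin n) D)
    (hST : S * T = 1) (hTS : T * S = 1) (d : Fin n → D) :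
    IsDiagonalizable (S * Matrix.diagonal d * T) := by
  refine ⟨S, T, hST, hTS, d, ?_⟩
  calc T * (S * Matrix.diagonal d * T) * S
      = (T * S) * Matrix.diagonal d * (T * S) := by
        simp only [Matrix.mul_assoc]
    _ = Matrix.diagonal d := by rw [hTS]; simp

end Matrices

set_option maxHeartbeats 2000000 in
/-- Over a division ring that is not the field with two elements, every nilpotent
    matrix is a sum of two diagonalizable matrices. -/
theorem stmt_10 (D : Type*) [DivisionRing D] (hD : Nat.card D ≠ 2)
    {n : ℕ} (N : Matrix (Fin n) (Fin n) D) (hN : IsNilpotent N) :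
    ∃ B C : Matrix (Fin n) (Fin n) D,
      IsDiagonalizable B ∧ IsDiagonalizable C ∧ N = B + C := by
  classical
  -- the linear map `v ↦ v ᵥ* N` on row vectors
  let f : (Fin n → D) →ₗ[D] (Fin n → D) :=
    { toFun := fun v => Matrix.vecMul v N
      map_add' := fun u v => Matrix.add_vecMul N u v
      map_smul' := fun a v => Matrix.smul_vecMul a v N }
  have hfpow : ∀ (k : ℕ) (v : Fin n → D), (f ^ k) v = Matrix.vecMul v (N ^ k) := by
    intro k
    induction k with
    | zero => intro v; simp [Matrix.vecMul_one]
    | succ m ihm =>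
      intro v
      rw [pow_succ, Module.End.mul_apply, ihm]
      show Matrix.vecMul (Matrix.vecMul v N) (N ^ m) = _
      rw [Matrix.vecMul_vecMul, ← pow_succ']
  have hfnil : IsNilpotent f := by
    obtain ⟨k, hk⟩ := hN
    exact ⟨k, by ext v; simp [hfpow, hk]⟩
  obtain ⟨A, B, hcompl, hgA, hgB⟩ := grading f hfnil
  -- adapted basis
  let a := Module.finrank D A
  let b := Module.finrank D B
  let bA : Module.Basis (Fin a) D A := Module.finBasis D A
  let bB : Module.Basis (Fin b) D B := Module.finBasis D B
  have hab : a + b = n := by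
    have h1 := Submodule.finrank_add_eq_of_isCompl hcompl
    have h2 : Module.finrank D (Fin n → D) = n := by simp
    rw [h2] at h1
    exact h1
  let e0 : (Fin a ⊕ Fin b) ≃ Fin n := finSumFinEquiv.trans (finCongr hab)
  let bV : Module.Basis (Fin n) D (Fin n → D) :=
    ((bA.prod bB).map (Submodule.prodEquivOfIsCompl A B hcompl)).reindex e0
  let σ : Fin n → Bool := fun i => (e0.symm i).isLeft
  have hbVleft : ∀ (x : Fin a), bV (e0 (Sum.inl x)) = (bA x : Fin n → D) := by
    intro x
    rw [Module.Basis.reindex_apply, Equiv.symm_apply_apply, Module.Basis.map_apply, Module.Basis.prod_apply]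
    simp [Submodule.coe_prodEquivOfIsCompl']
  have hbVright : ∀ (x : Fin b), bV (e0 (Sum.inr x)) = (bB x : Fin n → D) := by
    intro x
    rw [Module.Basis.reindex_apply, Equiv.symm_apply_apply, Module.Basis.map_apply, Module.Basis.prod_apply]
    simp [Submodule.coe_prodEquivOfIsCompl']
  have hmemA : ∀ i, σ i = true → bV i ∈ A := by
    intro i hi
    rcases h : e0.symm i with x | x
    · have : i = e0 (Sum.inl x) := by rw [← h, Equiv.apply_symm_apply]
      rw [this, hbVleft]
      exact (bA x).2
    · exfalso; simp only [σ, h] at hi; simp at hi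
  have hmemB : ∀ i, σ i = false → bV i ∈ B := by
    intro i hi
    rcases h : e0.symm i with x | x
    · exfalso; simp only [σ, h] at hi; simp at hi
    · have : i = e0 (Sum.inr x) := by rw [← h, Equiv.apply_symm_apply]
      rw [this, hbVright]
      exact (bB x).2
  -- repr vanishing lemmas
  have hreprB : ∀ x ∈ B, ∀ j, σ j = true → bV.repr x j = 0 := by
    intro x hx j hj
    let ψ : B →ₗ[D] D :=
      (Finsupp.lapply j).comp (bV.repr.toLinearMap.comp B.subtype)
    have hψ : ψ = 0 := by
      apply bB.ext
      intro k
      show bV.repr ↑(bB k) j = 0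
      rw [← hbVright k, Module.Basis.repr_self]
      rw [Finsupp.single_apply]
      rw [if_neg]
      intro h
      have : σ j = false := by simp only [σ, ← h, Equiv.symm_apply_apply]; rfl
      rw [this] at hj; exact Bool.noConfusion hj
    have := LinearMap.congr_fun hψ ⟨x, hx⟩
    simpa [ψ] using this
  have hreprA : ∀ x ∈ A, ∀ j, σ j = false → bV.repr x j = 0 := by
    intro x hx j hj
    let ψ : A →ₗ[D] D :=
      (Finsupp.lapply j).comp (bV.repr.toLinearMap.comp A.subtype)
    have hψ : ψ = 0 := by
      apply bA.ext
      intro k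
      show bV.repr ↑(bA k) j = 0
      rw [← hbVleft k, Module.Basis.repr_self]
      rw [Finsupp.single_apply]
      rw [if_neg]
      intro h
      have : σ j = true := by simp only [σ, ← h, Equiv.symm_apply_apply]; rfl
      rw [this] at hj; exact Bool.noConfusion hj
    have := LinearMap.congr_fun hψ ⟨x, hx⟩
    simpa [ψ] using this
  -- change of basis matrices
  let Pm : Matrix (Fin n) (Fin n) D := Matrix.of fun i j => bV i j
  let Qm : Matrix (Fin n) (Fin n) D := Matrix.of fun i j => bV.repr (Pi.single i 1) j
  have hsum : ∀ (x : Fin n → D) (k : Fin n), ∑ j, bV.repr x j * bV j k = x k := by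
    intro x k
    have h1 : ∑ j, bV.repr x j • bV j = x := bV.sum_repr x
    calc ∑ j, bV.repr x j * bV j k = (∑ j, bV.repr x j • bV j) k := by
          rw [Finset.sum_apply]; rfl
      _ = x k := by rw [h1]
  have hQP : Qm * Pm = 1 := by
    ext i k
    rw [Matrix.mul_apply]
    show ∑ j, bV.repr (Pi.single i 1) j * bV j k = _
    rw [hsum]
    rw [Matrix.one_apply, Pi.single_apply]
    by_cases h : i = k <;> simp [h, eq_comm]
  have hPQ : Pm * Qm = 1 := by
    ext i k
    rw [Matrix.mul_apply]
    show ∑ j, bV i j * bV.repr (Pi.single j 1) k = _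
    have h1 : ∀ j : Fin n, bV i j * bV.repr (Pi.single j (1 : D)) k
        = bV.repr (Pi.single j (bV i j)) k := by
      intro j
      have : (Pi.single j (bV i j) : Fin n → D)
          = bV i j • (Pi.single j (1 : D) : Fin n → D) := by
        rw [← Pi.single_smul, smul_eq_mul, mul_one]
      rw [this, map_smul]
      rfl
    simp_rw [h1]
    have h2 : ∑ j, bV.repr (Pi.single j (bV i j)) k
        = bV.repr (∑ j, Pi.single j (bV i j)) k := by
      rw [map_sum]; rw [Finsupp.finset_sum_apply]
    rw [h2, Finset.univ_sum_single (bV i)]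
    rw [Module.Basis.repr_self, Finsupp.single_apply, Matrix.one_apply]
  -- the conjugated matrix
  let Cm : Matrix (Fin n) (Fin n) D := Matrix.of fun i j => bV.repr (f (bV i)) j
  have hPN : Pm * N = Cm * Pm := by
    ext i k
    rw [Matrix.mul_apply, Matrix.mul_apply]
    show ∑ j, bV i j * N j k = ∑ j, bV.repr (f (bV i)) j * bV j k
    rw [hsum]
    rfl
  have hNQCP : N = Qm * Cm * Pm := by
    calc N = (Qm * Pm) * N := by rw [hQP, Matrix.one_mul]
      _ = Qm * (Pm * N) := by rw [Matrix.mul_assoc]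
      _ = Qm * (Cm * Pm) := by rw [hPN]
      _ = Qm * Cm * Pm := by rw [Matrix.mul_assoc]
  have hbip : ∀ i j, σ i = σ j → Cm i j = 0 := by
    intro i j hij
    show bV.repr (f (bV i)) j = 0
    cases h : σ i with
    | true =>
      have hfx : f (bV i) ∈ B := hgA ⟨bV i, hmemA i h, rfl⟩
      exact hreprB _ hfx j (by rw [← hij, h])
    | false =>
      have hfx : f (bV i) ∈ A := hgB ⟨bV i, hmemB i h, rfl⟩
      exact hreprA _ hfx j (by rw [← hij, h])
  -- bipartite decomposition
  let dfun : Fin n → D := fun i => if σ i then 1 else 0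
  let Dσ : Matrix (Fin n) (Fin n) D := Matrix.diagonal dfun
  let Ct : Matrix (Fin n) (Fin n) D := Matrix.of fun i j => if σ i then Cm i j else 0
  let Cb : Matrix (Fin n) (Fin n) D := Matrix.of fun i j => if σ i then 0 else Cm i j
  have hCtCb : Ct + Cb = Cm := by
    ext i j
    show (if σ i then Cm i j else 0) + (if σ i then 0 else Cm i j) = Cm i j
    by_cases h : σ i <;> simp [h]
  have hCtDσ : Ct * Dσ = 0 := by
    ext i k
    rw [Matrix.mul_apply]
    apply Finset.sum_eq_zero
    intro j _
    by_cases hjk : j = k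
    · subst hjk
      show (if σ i then Cm i j else 0) * Matrix.diagonal dfun j j = 0
      rw [Matrix.diagonal_apply_eq]
      show (if σ i then Cm i j else 0) * (if σ j then (1:D) else 0) = 0
      by_cases hi : σ i
      · by_cases hj : σ j
        · rw [if_pos hi, hbip i j (by rw [hi, hj]), zero_mul]
        · simp [hj]
      · simp [hi]
    · show (if σ i then Cm i j else 0) * Matrix.diagonal dfun j k = 0
      rw [Matrix.diagonal_apply_ne _ hjk, mul_zero]
  have hDσCt : Dσ * Ct = Ct := by
    ext i k
    rw [Matrix.mul_apply]
    rw [Finset.sum_eq_single i]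
    · show Matrix.diagonal dfun i i * Ct i k = Ct i k
      rw [Matrix.diagonal_apply_eq]
      show (if σ i then (1:D) else 0) * (if σ i then Cm i k else 0)
          = (if σ i then Cm i k else 0)
      by_cases hi : σ i <;> simp [hi]
    · intro j _ hj
      show Matrix.diagonal dfun i j * Ct j k = 0
      rw [Matrix.diagonal_apply_ne _ (Ne.symm hj), zero_mul]
    · intro h; exact absurd (Finset.mem_univ i) h
  have hCtCt : Ct * Ct = 0 := by
    ext i k
    rw [Matrix.mul_apply]
    apply Finset.sum_eq_zero
    intro j _
    show (if σ i then Cm i j else 0) * (if σ j then Cm j k else 0) = 0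
    by_cases hi : σ i
    · by_cases hj : σ j
      · rw [if_pos hi, hbip i j (by rw [hi, hj]), zero_mul]
      · simp [hj]
    · simp [hi]
  have hCbDσ : Cb * Dσ = Cb := by
    ext i k
    rw [Matrix.mul_apply]
    rw [Finset.sum_eq_single k]
    · show Cb i k * Matrix.diagonal dfun k k = Cb i k
      rw [Matrix.diagonal_apply_eq]
      show (if σ i then (0:D) else Cm i k) * (if σ k then (1:D) else 0)
          = (if σ i then (0:D) else Cm i k)
      by_cases hi : σ i
      · simp [hi]
      · by_cases hk : σ k
        · simp [hi, hk]
        · simp only [if_neg hi, if_neg hk, mul_zero]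
          rw [Bool.not_eq_true] at hi hk
          exact (hbip i k (by rw [hi, hk])).symm
    · intro j _ hj
      show Cb i j * Matrix.diagonal dfun j k = 0
      rw [Matrix.diagonal_apply_ne _ hj, mul_zero]
    · intro h; exact absurd (Finset.mem_univ k) h
  have hDσCb : Dσ * Cb = 0 := by
    ext i k
    rw [Matrix.mul_apply]
    rw [Finset.sum_eq_single i]
    · show Matrix.diagonal dfun i i * Cb i k = 0
      rw [Matrix.diagonal_apply_eq]
      show (if σ i then (1:D) else 0) * (if σ i then 0 else Cm i k) = 0
      by_cases hi : σ i <;> simp [hi]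
    · intro j _ hj
      show Matrix.diagonal dfun i j * Cb j k = 0
      rw [Matrix.diagonal_apply_ne _ (Ne.symm hj), zero_mul]
    · intro h; exact absurd (Finset.mem_univ i) h
  have hCbCb : Cb * Cb = 0 := by
    ext i k
    rw [Matrix.mul_apply]
    apply Finset.sum_eq_zero
    intro j _
    show (if σ i then 0 else Cm i j) * (if σ j then 0 else Cm j k) = 0
    by_cases hi : σ i
    · simp [hi]
    · by_cases hj : σ j
      · simp [hj]
      · rw [Bool.not_eq_true] at hi hj
        rw [if_neg (by simp [hi]), hbip i j (by rw [hi, hj]), zero_mul]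
  -- the two diagonalizable summands
  have hCt1 : (1 - Ct) * (1 + Ct) = 1 := by
    rw [sub_mul, one_mul, mul_add, mul_one, hCtCt]
    abel
  have hCt1' : (1 + Ct) * (1 - Ct) = 1 := by
    rw [add_mul, one_mul, mul_sub, mul_one, hCtCt]
    abel
  have hCb1 : (1 - Cb) * (1 + Cb) = 1 := by
    rw [sub_mul, one_mul, mul_add, mul_one, hCbCb]
    abel
  have hCb1' : (1 + Cb) * (1 - Cb) = 1 := by
    rw [add_mul, one_mul, mul_sub, mul_one, hCbCb]
    abel
  have hconjt : (1 - Ct) * Dσ * (1 + Ct) = Dσ + Ct := by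
    have h1 : (1 - Ct) * Dσ = Dσ := by rw [sub_mul, one_mul, hCtDσ, sub_zero]
    rw [h1, mul_add, mul_one, hDσCt]
  have hconjb : (1 - Cb) * (-Dσ) * (1 + Cb) = -Dσ + Cb := by
    have h1 : (1 - Cb) * (-Dσ) = -Dσ + Cb := by
      rw [sub_mul, one_mul, mul_neg, hCbDσ, sub_neg_eq_add]
    rw [h1, mul_add, mul_one, add_mul, neg_mul, hDσCb, hCbCb, neg_zero, add_zero, add_zero]
  let S₁ := Qm * (1 - Ct)
  let T₁ := (1 + Ct) * Pm
  let S₂ := Qm * (1 - Cb)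
  let T₂ := (1 + Cb) * Pm
  have hS₁T₁ : S₁ * T₁ = 1 := by
    show Qm * (1 - Ct) * ((1 + Ct) * Pm) = 1
    calc Qm * (1 - Ct) * ((1 + Ct) * Pm) = Qm * ((1 - Ct) * (1 + Ct)) * Pm := by
          simp only [Matrix.mul_assoc]
      _ = 1 := by rw [hCt1, Matrix.mul_one, hQP]
  have hT₁S₁ : T₁ * S₁ = 1 := by
    show (1 + Ct) * Pm * (Qm * (1 - Ct)) = 1
    calc (1 + Ct) * Pm * (Qm * (1 - Ct)) = (1 + Ct) * (Pm * Qm) * (1 - Ct) := by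
          simp only [Matrix.mul_assoc]
      _ = 1 := by rw [hPQ, Matrix.mul_one, hCt1']
  have hS₂T₂ : S₂ * T₂ = 1 := by
    show Qm * (1 - Cb) * ((1 + Cb) * Pm) = 1
    calc Qm * (1 - Cb) * ((1 + Cb) * Pm) = Qm * ((1 - Cb) * (1 + Cb)) * Pm := by
          simp only [Matrix.mul_assoc]
      _ = 1 := by rw [hCb1, Matrix.mul_one, hQP]
  have hT₂S₂ : T₂ * S₂ = 1 := by
    show (1 + Cb) * Pm * (Qm * (1 - Cb)) = 1
    calc (1 + Cb) * Pm * (Qm * (1 - Cb)) = (1 + Cb) * (Pm * Qm) * (1 - Cb) := by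
          simp only [Matrix.mul_assoc]
      _ = 1 := by rw [hPQ, Matrix.mul_one, hCb1']
  have hdiag2 : Matrix.diagonal (fun i => if σ i then (-1 : D) else 0) = -Dσ := by
    ext i j
    by_cases h : i = j
    · subst h
      rw [Matrix.diagonal_apply_eq]
      show _ = -(Matrix.diagonal dfun i i)
      rw [Matrix.diagonal_apply_eq]
      show (if σ i then (-1:D) else 0) = -(if σ i then (1:D) else 0)
      by_cases hi : σ i <;> simp [hi]
    · rw [Matrix.diagonal_apply_ne _ h]
      show (0:D) = -(Matrix.diagonal dfun i j)
      rw [Matrix.diagonal_apply_ne _ h, neg_zero]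
      
  refine ⟨S₁ * Matrix.diagonal dfun * T₁,
          S₂ * Matrix.diagonal (fun i => if σ i then (-1 : D) else 0) * T₂,
          isDiagonalizable_conj_diagonal S₁ T₁ hS₁T₁ hT₁S₁ dfun,
          isDiagonalizable_conj_diagonal S₂ T₂ hS₂T₂ hT₂S₂ _, ?_⟩
  have e1 : S₁ * Matrix.diagonal dfun * T₁ = Qm * (Dσ + Ct) * Pm := by
    show Qm * (1 - Ct) * Matrix.diagonal dfun * ((1 + Ct) * Pm) = _
    calc Qm * (1 - Ct) * Dσ * ((1 + Ct) * Pm)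
        = Qm * ((1 - Ct) * Dσ * (1 + Ct)) * Pm := by simp only [Matrix.mul_assoc]
      _ = Qm * (Dσ + Ct) * Pm := by rw [hconjt]
  have e2 : S₂ * Matrix.diagonal (fun i => if σ i then (-1 : D) else 0) * T₂
      = Qm * (-Dσ + Cb) * Pm := by
    rw [hdiag2]
    show Qm * (1 - Cb) * (-Dσ) * ((1 + Cb) * Pm) = _
    calc Qm * (1 - Cb) * (-Dσ) * ((1 + Cb) * Pm)
        = Qm * ((1 - Cb) * (-Dσ) * (1 + Cb)) * Pm := by simp only [Matrix.mul_assoc]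
      _ = Qm * (-Dσ + Cb) * Pm := by rw [hconjb]
  rw [e1, e2, hNQCP]
  have : Qm * (Dσ + Ct) * Pm + Qm * (-Dσ + Cb) * Pm
      = Qm * ((Dσ + Ct) + (-Dσ + Cb)) * Pm := by noncomm_ring
  rw [this]
  have : (Dσ + Ct) + (-Dσ + Cb) = Ct + Cb := by abel
  rw [this, hCtCb]
end

section
/- Let D be a noncommutative division ring. Then every 2×2 matrix over D can be written as a sum of two diagonalizable matrices over D. -/
lemma diag_fin_two {D : Type*} [DivisionRing D] (a b : D) :
    Matrix.diagonal ![a, b] = !![a, 0; 0, b] := by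
  ext i j
  fin_cases i <;> fin_cases j <;> simp [Matrix.diagonal]

lemma isDiag_upper {D : Type*} [DivisionRing D] (x q : D) (hx : x ≠ 0) :
    IsDiagonalizable !![x, q; 0, 0] := by
  refine ⟨!![1, -(x⁻¹*q); 0, 1], !![1, x⁻¹*q; 0, 1], ?_, ?_, ![x, 0], ?_⟩
  · simp [Matrix.mul_fin_two, Matrix.one_fin_two]
  · simp [Matrix.mul_fin_two, Matrix.one_fin_two]
  · have key : x * (x⁻¹ * q) = q := by rw [← mul_assoc, mul_inv_cancel₀ hx, one_mul]
    rw [diag_fin_two]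
    simp [Matrix.mul_fin_two, key]
    ext i
    fin_cases i <;> simp

lemma isDiag_lower {D : Type*} [DivisionRing D] (s r v : D) (hv : v ≠ 0) :
    IsDiagonalizable !![v⁻¹ * (s * v + r), 0; r, s] := by
  refine ⟨!![1, 0; v, 1], !![1, 0; -v, 1], ?_, ?_, ![v⁻¹ * (s * v + r), s], ?_⟩
  · simp [Matrix.mul_fin_two, Matrix.one_fin_two]
  · simp [Matrix.mul_fin_two, Matrix.one_fin_two]
  · have key : v * (v⁻¹ * (s * v + r)) = s * v + r := by
      rw [← mul_assoc, mul_inv_cancel₀ hv, one_mul]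
    rw [diag_fin_two]
    simp [Matrix.mul_fin_two, key]

lemma isDiag_diagonal {D : Type*} [DivisionRing D] (d : Fin 2 → D) :
    IsDiagonalizable (Matrix.diagonal d) :=
  ⟨1, 1, by simp, by simp, d, by simp⟩

/-- Over a noncommutative division ring, every 2×2 matrix is a sum of two
    diagonalizable matrices. -/
theorem stmt_11 (D : Type*) [DivisionRing D] (hnc : ∃ a b : D, a * b ≠ b * a)
    (A : Matrix (Fin 2) (Fin 2) D) :
    ∃ B C : Matrix (Fin 2) (Fin 2) D,
      IsDiagonalizable B ∧ IsDiagonalizable C ∧ A = B + C := by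
  set P := A 0 0 with hP
  set Q := A 0 1 with hQ
  set R := A 1 0 with hR
  set S := A 1 1 with hS
  have hA : A = !![P, Q; R, S] := by
    rw [hP, hQ, hR, hS]; exact Matrix.etaExpand_eq A |>.symm
  by_cases h : R = 0
  · refine ⟨!![1, Q; 0, 0], !![P - 1, 0; 0, S], isDiag_upper 1 Q one_ne_zero, ?_, ?_⟩
    · rw [← diag_fin_two]; exact isDiag_diagonal _
    · rw [hA, h]
      ext i j
      fin_cases i <;> fin_cases j <;> simp
  · -- find v ≠ 0 with v*P - S*v ≠ R
    have hv : ∃ v : D, v ≠ 0 ∧ v * P - S * v ≠ R := by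
      by_contra hc
      push_neg at hc
      obtain ⟨a, b, hab⟩ := hnc
      have ha0 : a ≠ 0 := by rintro rfl; simp at hab
      have ha1 : (1 : D) + a ≠ 0 := by
        intro hh
        have : a = -1 := eq_neg_of_add_eq_zero_right hh
        rw [this] at hab
        simp at hab
      have h1 := hc 1 one_ne_zero
      have h2 := hc a ha0
      have h3 := hc (1 + a) ha1
      have e : R + R = R := by
        calc R + R = (1 * P - S * 1) + (a * P - S * a) := by rw [h1, h2]
        _ = (1 + a) * P - S * (1 + a) := by noncomm_ring
        _ = R := h3
      exact h (add_eq_left.mp e)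
    obtain ⟨v, hv0, hvne⟩ := hv
    set a := v⁻¹ * (S * v + R) with ha
    have hva : v * a = S * v + R := by
      rw [ha, ← mul_assoc, mul_inv_cancel₀ hv0, one_mul]
    have hx : P - a ≠ 0 := by
      intro hh
      apply hvne
      rw [sub_eq_zero] at hh
      rw [hh, hva]
      exact add_sub_cancel_left _ _
    refine ⟨!![P - a, Q; 0, 0], !![a, 0; R, S], isDiag_upper _ Q hx,
      ha ▸ isDiag_lower S R v hv0, ?_⟩
    rw [hA]
    ext i j
    fin_cases i <;> fin_cases j <;> simp
end

section
/- Let D be an ordinary quaternion division ring over a real-closed center F. Then every element of D is a square, i.e., for every a ∈ D there exists b ∈ D with b² = a. -/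
open Polynomial Quaternion

section NJ
variable (F : Type*) [Field F] [Fact (Irreducible (X ^ 2 + 1 : Polynomial F))]

lemma nj_no_root (c : F) (hc : c ^ 2 = -1) : False := by
  have h := (Fact.out : Irreducible (X ^ 2 + 1 : Polynomial F))
  have hfac : (X ^ 2 + 1 : Polynomial F) = (X - C c) * (X + C c) := by
    have h2 : (C c : Polynomial F) ^ 2 = C (c ^ 2) := by rw [← C_pow]
    ring_nf
    rw [h2, hc, map_neg, map_one]
    ring_nf
  rcases h.isUnit_or_isUnit hfac with hu | hu
  · exact (Polynomial.not_isUnit_X_sub_C c) hu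
  · exact Polynomial.not_isUnit_X_sub_C (-c) (by simpa [sub_neg_eq_add] using hu)

lemma nj_two_ne_zero : (2 : F) ≠ 0 := by
  intro h
  refine nj_no_root F 1 ?_
  rw [one_pow]
  linear_combination h

lemma nj_root_sq :
    (AdjoinRoot.root (X ^ 2 + 1 : Polynomial F)) ^ 2 = -1 := by
  have h0 := AdjoinRoot.eval₂_root (X ^ 2 + 1 : Polynomial F)
  simp only [eval₂_add, eval₂_X_pow, eval₂_one] at h0
  linear_combination h0

lemma nj_indep (p q : F)
    (h : algebraMap F (AdjoinRoot (X ^ 2 + 1 : Polynomial F)) p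
      + algebraMap F _ q * AdjoinRoot.root _ = 0) : p = 0 ∧ q = 0 := by
  have hinj := (algebraMap F (AdjoinRoot (X ^ 2 + 1 : Polynomial F))).injective
  have hr2 := nj_root_sq F
  by_cases hq : q = 0
  · subst hq
    simp only [map_zero, zero_mul, add_zero] at h
    exact ⟨hinj (by simpa using h), rfl⟩
  · exfalso
    have hroot : AdjoinRoot.root (X ^ 2 + 1 : Polynomial F) = algebraMap F _ (-(p / q)) := by
      have hqne : algebraMap F (AdjoinRoot (X ^ 2 + 1 : Polynomial F)) q ≠ 0 := by
        simpa using fun hh => hq (hinj (by simpa using hh))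
      rw [map_neg, map_div₀, ← neg_div, eq_div_iff hqne]
      linear_combination h
    refine nj_no_root F (-(p / q)) ?_
    apply hinj
    rw [map_pow, ← hroot, hr2, map_neg, map_one]

lemma nj_decomp (z : AdjoinRoot (X ^ 2 + 1 : Polynomial F)) :
    ∃ c d : F, z = algebraMap F _ c + algebraMap F _ d * AdjoinRoot.root _ := by
  obtain ⟨p, rfl⟩ := AdjoinRoot.mk_surjective z
  have hmonic : (X ^ 2 + 1 : Polynomial F).Monic := by
    apply Polynomial.monic_X_pow_add_C; simp
  set f : Polynomial F := X ^ 2 + 1 with hf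
  have hmk : AdjoinRoot.mk f p = AdjoinRoot.mk f (p %ₘ f) := by
    conv_lhs => rw [← Polynomial.modByMonic_add_div p f]
    simp [AdjoinRoot.mk_self]
  have hdeg : (p %ₘ f).degree ≤ 1 := by
    have := Polynomial.degree_modByMonic_lt p hmonic
    have hdf : f.degree = 2 := by rw [hf]; compute_degree!
    rw [hdf] at this
    exact Order.le_of_lt_succ (by exact_mod_cast this)
  refine ⟨(p %ₘ f).coeff 0, (p %ₘ f).coeff 1, ?_⟩
  rw [hmk, Polynomial.eq_X_add_C_of_degree_le_one hdeg]
  simp [AdjoinRoot.algebraMap_eq, map_add, map_mul, AdjoinRoot.mk_C, AdjoinRoot.mk_X]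
  ring

variable (hac : IsAlgClosed (AdjoinRoot (X ^ 2 + 1 : Polynomial F)))
include hac

theorem nj_key (x y : F) :
    ∃ c d : F, c ^ 2 - d ^ 2 = x ∧ 2 * c * d = y := by
  set K := AdjoinRoot (X ^ 2 + 1 : Polynomial F)
  set r := AdjoinRoot.root (X ^ 2 + 1 : Polynomial F)
  obtain ⟨z, hz⟩ := IsAlgClosed.exists_pow_nat_eq
    (algebraMap F K x + algebraMap F K y * r) zero_lt_two
  obtain ⟨c, d, rfl⟩ := nj_decomp F z
  refine ⟨c, d, ?_⟩
  have hr2 := nj_root_sq F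
  have hzero : algebraMap F K (c ^ 2 - d ^ 2 - x) + algebraMap F K (2 * c * d - y) * r = 0 := by
    push_cast [map_sub, map_mul, map_pow, map_ofNat]
    linear_combination hz - (algebraMap F K d)^2 * hr2
  obtain ⟨h1, h2⟩ := nj_indep F _ _ hzero
  constructor <;> [linear_combination h1; linear_combination h2]

lemma nj_sq_or (x : F) : (∃ y : F, y ^ 2 = x) ∨ (∃ y : F, y ^ 2 = -x) := by
  obtain ⟨c, d, h1, h2⟩ := nj_key F hac x 0
  have hcd : c = 0 ∨ d = 0 := by
    rcases mul_eq_zero.mp h2 with h | h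
    · rcases mul_eq_zero.mp h with h | h
      · exact absurd h (nj_two_ne_zero F)
      · exact Or.inl h
    · exact Or.inr h
  rcases hcd with h | h
  · exact Or.inr ⟨d, by rw [← h1, h]; ring⟩
  · exact Or.inl ⟨c, by rw [← h1, h]; ring⟩

lemma nj_sum_sq (p q : F) : ∃ e : F, e ^ 2 = p ^ 2 + q ^ 2 := by
  obtain ⟨c, d, h1, h2⟩ := nj_key F hac p q
  exact ⟨c ^ 2 + d ^ 2, by linear_combination (c^2 - d^2 + p) * h1 + (2*c*d + q) * h2⟩

omit hac in
lemma nj_not_both (x u v : F) (hx : x ≠ 0) (hu : u ^ 2 = x) (hv : v ^ 2 = -x) : False := by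
  have hune : u ≠ 0 := fun h => hx (by rw [← hu, h]; ring)
  exact nj_no_root F (v / u) (by field_simp; linear_combination hv + hu)

end NJ

/-- Niven–Jacobson: over a real-closed field F (F not algebraically closed, but
    F(√-1) algebraically closed), every element of the ordinary quaternion division
    ring ℍ[F] is a square. -/
theorem stmt_19 (F : Type*) [Field F]
    [Fact (Irreducible (X ^ 2 + 1 : Polynomial F))]
    (hnac : ¬ IsAlgClosed F)
    (hac : IsAlgClosed (AdjoinRoot (X ^ 2 + 1 : Polynomial F)))
    (a : Quaternion F) : ∃ b : Quaternion F, b ^ 2 = a := by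
  obtain ⟨r, x, y, z⟩ := a
  obtain ⟨s1, hs1⟩ := nj_sum_sq F hac x y
  obtain ⟨s2, hs2⟩ := nj_sum_sq F hac s1 z
  have hs2' : s2 ^ 2 = x ^ 2 + y ^ 2 + z ^ 2 := by linear_combination hs2 + hs1
  by_cases hn : x ^ 2 + y ^ 2 + z ^ 2 = 0
  · -- scalar case
    have hz0 : z = 0 := by
      by_contra hz
      exact nj_not_both F (z ^ 2) z s1 (pow_ne_zero 2 hz) rfl
        (by linear_combination hs1 + hn)
    have hy0 : y = 0 := by
      by_contra hy
      exact nj_not_both F (y ^ 2) y x (pow_ne_zero 2 hy) rfl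
        (by linear_combination hn - z * hz0)
    have hx0 : x = 0 := by
      have h0 : x ^ 2 = 0 := by linear_combination hn - z * hz0 - y * hy0
      exact pow_eq_zero_iff two_ne_zero |>.mp h0
    subst hz0 hy0 hx0
    rcases nj_sq_or F hac r with ⟨t, ht⟩ | ⟨t, ht⟩
    · refine ⟨⟨t, 0, 0, 0⟩, ?_⟩
      erw [pow_two]
      ext <;>
        (first
          | erw [Quaternion.re_mul] | erw [Quaternion.imI_mul]
          | erw [Quaternion.imJ_mul] | erw [Quaternion.imK_mul]) <;>
        first
        | linear_combination ht
        | ring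
    · refine ⟨⟨0, t, 0, 0⟩, ?_⟩
      erw [pow_two]
      ext <;>
        (first
          | erw [Quaternion.re_mul] | erw [Quaternion.imI_mul]
          | erw [Quaternion.imJ_mul] | erw [Quaternion.imK_mul]) <;>
        first
        | linear_combination -ht
        | ring
  · -- non-scalar case
    have h2 := nj_two_ne_zero F
    obtain ⟨m0, hm0⟩ := nj_sum_sq F hac r s2
    have hkey : ∃ m t : F, m ^ 2 = r ^ 2 + (x ^ 2 + y ^ 2 + z ^ 2) ∧
        t ^ 2 = (m + r) / 2 := by
      have hm0' : m0 ^ 2 = r ^ 2 + (x ^ 2 + y ^ 2 + z ^ 2) := by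
        linear_combination hm0 + hs2'
      rcases nj_sq_or F hac ((m0 + r) / 2) with ⟨t, ht⟩ | ⟨t, ht⟩
      · exact ⟨m0, t, hm0', ht⟩
      · rw [← neg_div, eq_div_iff h2] at ht
        have htne : t ≠ 0 := by
          intro h0
          rw [h0] at ht
          have hmr : m0 = -r := by linear_combination ht
          apply hn
          linear_combination - hm0' + (m0 - r) * hmr
        refine ⟨-m0, s2 / (2 * t), by linear_combination hm0', ?_⟩
        have hne1 : (2 * t) ^ 2 ≠ 0 := pow_ne_zero _ (mul_ne_zero h2 htne)
        rw [div_pow, div_eq_div_iff hne1 h2]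
        linear_combination 2 * hs2' - 2 * hm0' - (2 * (-m0 + r)) * ht
    obtain ⟨m, t, hm, ht⟩ := hkey
    rw [eq_div_iff h2] at ht
    have htne : t ≠ 0 := by
      intro h0
      rw [h0] at ht
      apply hn
      have hmr : m = -r := by linear_combination -ht
      linear_combination - hm + (m - r) * hmr
    have hkey2 : 4 * t ^ 4 - 4 * r * t ^ 2 = x ^ 2 + y ^ 2 + z ^ 2 := by
      linear_combination (2 * t ^ 2 + m - r) * ht + hm
    refine ⟨⟨t, x / (2 * t), y / (2 * t), z / (2 * t)⟩, ?_⟩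
    have hc : ∀ w : F, 2 * t * (w / (2 * t)) = w := fun w => by
      rw [mul_div_cancel₀ _ (mul_ne_zero h2 htne)]
    erw [pow_two]
    ext
    · erw [Quaternion.re_mul]
      field_simp
      linear_combination hkey2
    · erw [Quaternion.imI_mul]
      linear_combination hc x
    · erw [Quaternion.imJ_mul]
      linear_combination hc y
    · erw [Quaternion.imK_mul]
      linear_combination hc z
end
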